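/- arXiv:1806.08142 — 2 statements merged into one kernel-verified Lean document; each statement's English description precedes it below -/
import Mathlib

section
/- Let N ≥ 1, let v be a smooth vector field on ℝ^N and c : ℝ^N → ℝ a smooth function. For a smooth covector field α define the operator a_v(α) on smooth functions by a_v(α)(f) := −c·α(v)·(df)(v), and define the bracket [α,β]_v := c·( β(v)·L_v α − α(v)·L_v β ). Then for all smooth covector fields α, β and every smooth function f : ℝ^N → ℝ one has a_v([α,β]_v)(f) = a_v(α)( a_v(β)(f) ) − a_v(β)( a_v(α)(f) ); that is, a_v is a morphism from the bracket [·,·]_v to the commutator of the associated first-order differential operators. -/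
open scoped ContDiff

/-- Partial derivative `∂f/∂x_s` at `x`. -/
noncomputable def pd {N : ℕ} (s : Fin N) (f : (Fin N → ℝ) → ℝ) (x : Fin N → ℝ) : ℝ :=
  fderiv ℝ f x (Pi.single s 1)

/-- Pairing `α(v) = ∑ s, α_s v_s` of a covector field with a vector field. -/
noncomputable def pairing {N : ℕ} (α v : (Fin N → ℝ) → (Fin N → ℝ)) (x : Fin N → ℝ) : ℝ :=
  ∑ s, α x s * v x s

/-- Lie derivative of a covector field `α` along a vector field `v`:
`(L_v α)_k = ∑ s (v_s ∂α_k/∂x_s + α_s ∂v_s/∂x_k)`. -/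
noncomputable def lieD {N : ℕ} (v α : (Fin N → ℝ) → (Fin N → ℝ)) (x : Fin N → ℝ)
    (k : Fin N) : ℝ :=
  ∑ s, (v x s * pd s (fun y => α y k) x + α x s * pd k (fun y => v y s) x)

/-- The differential `df`, with components `(df)_k = ∂f/∂x_k`. -/
noncomputable def dF {N : ℕ} (f : (Fin N → ℝ) → ℝ) (x : Fin N → ℝ) (k : Fin N) : ℝ :=
  pd k f x

/-- The bracket `[α,β]_v = c (β(v) L_v α − α(v) L_v β)`. -/
noncomputable def brktV {N : ℕ} (c : (Fin N → ℝ) → ℝ) (v : (Fin N → ℝ) → (Fin N → ℝ))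
    (α β : (Fin N → ℝ) → (Fin N → ℝ)) (x : Fin N → ℝ) (k : Fin N) : ℝ :=
  c x * (pairing β v x * lieD v α x k - pairing α v x * lieD v β x k)

/-- The first-order operator `a_v(α)(f) = −c · α(v) · (df)(v)`. -/
noncomputable def aV {N : ℕ} (c : (Fin N → ℝ) → ℝ) (v α : (Fin N → ℝ) → (Fin N → ℝ))
    (f : (Fin N → ℝ) → ℝ) (x : Fin N → ℝ) : ℝ :=
  -(c x) * pairing α v x * pairing (dF f) v x

/-
Write `D g := dg(v)` for the derivative along `v`, so that `a_v(α) f = -c · α(v) · D f`.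
Cartan's formula gives `(L_v α)(v) = D(α(v))`, since `L_v (i_v α) = i_v (L_v α) + i_{[v,v]} α`.
Hence `[α,β]_v(v) = c (β(v) D(α(v)) - α(v) D(β(v)))`, while by the Leibniz rule the commutator
`a_v(α) a_v(β) f - a_v(β) a_v(α) f` equals `c² (α(v) D(β(v)) - β(v) D(α(v))) D f`: the terms
containing `D c` and `D² f` are symmetric in `α, β` and cancel.
-/

section

variable {N : ℕ}

theorem fderiv_apply_eq_sum_pd (g : (Fin N → ℝ) → ℝ) (x w : Fin N → ℝ) :
    fderiv ℝ g x w = ∑ s, w s * pd s g x := by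
  rw [← ContinuousLinearMap.coe_coe, LinearMap.pi_apply_eq_sum_univ]
  refine Finset.sum_congr rfl fun s _ => ?_
  simp only [pd, smul_eq_mul, ContinuousLinearMap.coe_coe, eq_comm (a := s)]
  congr 2
  exact funext fun j => (Pi.single_apply s 1 j).symm

theorem pairing_dF (f : (Fin N → ℝ) → ℝ) (v : (Fin N → ℝ) → (Fin N → ℝ)) (x : Fin N → ℝ) :
    pairing (dF f) v x = fderiv ℝ f x (v x) := by
  rw [fderiv_apply_eq_sum_pd]
  exact Finset.sum_congr rfl fun s _ => mul_comm _ _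

theorem aV_apply (c : (Fin N → ℝ) → ℝ) (v α : (Fin N → ℝ) → (Fin N → ℝ))
    (f : (Fin N → ℝ) → ℝ) (x : Fin N → ℝ) :
    aV c v α f x = -(c x * pairing α v x * fderiv ℝ f x (v x)) := by
  rw [aV, pairing_dF]
  ring

theorem DifferentiableAt.pairing {α v : (Fin N → ℝ) → (Fin N → ℝ)} {x : Fin N → ℝ}
    (hα : DifferentiableAt ℝ α x) (hv : DifferentiableAt ℝ v x) :
    DifferentiableAt ℝ (pairing α v) x :=
  DifferentiableAt.fun_sum fun s _ =>
    (differentiableAt_pi.1 hα s).mul (differentiableAt_pi.1 hv s)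

theorem fderiv_mul_apply {g h : (Fin N → ℝ) → ℝ} {x : Fin N → ℝ}
    (hg : DifferentiableAt ℝ g x) (hh : DifferentiableAt ℝ h x) (w : Fin N → ℝ) :
    fderiv ℝ (fun y => g y * h y) x w = fderiv ℝ g x w * h x + g x * fderiv ℝ h x w := by
  rw [fderiv_fun_mul hg hh]
  simp only [add_apply, smul_apply, smul_eq_mul]
  ring

theorem pairing_lieD_self {v α : (Fin N → ℝ) → (Fin N → ℝ)} {x : Fin N → ℝ}
    (hv : DifferentiableAt ℝ v x) (hα : DifferentiableAt ℝ α x) :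
    pairing (lieD v α) v x = fderiv ℝ (pairing α v) x (v x) := by
  have hαs := differentiableAt_pi.1 hα
  have hvs := differentiableAt_pi.1 hv
  have hpairing : pairing α v = fun y => ∑ s, α y s * v y s := rfl
  rw [hpairing, fderiv_fun_sum fun s _ => (hαs s).fun_mul (hvs s), sum_apply]
  simp only [fderiv_mul_apply (hαs _) (hvs _), fderiv_apply_eq_sum_pd, pairing, lieD,
    add_mul, Finset.sum_add_distrib, Finset.sum_mul, Finset.mul_sum]
  rw [Finset.sum_comm (f := fun k s => α x s * pd k (fun y => v y s) x * v x k)]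
  congr 1
  exact Finset.sum_congr rfl fun _ _ => Finset.sum_congr rfl fun _ _ => by ring

theorem pairing_brktV (c : (Fin N → ℝ) → ℝ) (v α β : (Fin N → ℝ) → (Fin N → ℝ))
    (x : Fin N → ℝ) :
    pairing (brktV c v α β) v x
      = c x * (pairing β v x * pairing (lieD v α) v x
          - pairing α v x * pairing (lieD v β) v x) := by
  simp only [pairing, brktV, Finset.mul_sum, ← Finset.sum_sub_distrib]
  exact Finset.sum_congr rfl fun _ _ => by ring

theorem fderiv_aV_apply {c : (Fin N → ℝ) → ℝ} {v α : (Fin N → ℝ) → (Fin N → ℝ)}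
    {f : (Fin N → ℝ) → ℝ} {x : Fin N → ℝ} (hc : DifferentiableAt ℝ c x)
    (hα : DifferentiableAt ℝ (pairing α v) x)
    (hf : DifferentiableAt ℝ (fun y => fderiv ℝ f y (v y)) x) (w : Fin N → ℝ) :
    fderiv ℝ (aV c v α f) x w
      = -((fderiv ℝ c x w * pairing α v x + c x * fderiv ℝ (pairing α v) x w)
            * fderiv ℝ f x (v x)
          + c x * pairing α v x * fderiv ℝ (fun y => fderiv ℝ f y (v y)) x w) := by
  have haV : aV c v α f = fun y => -(c y * pairing α v y * fderiv ℝ f y (v y)) :=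
    funext (aV_apply c v α f)
  rw [haV, fderiv_fun_neg, neg_apply, fderiv_mul_apply (hc.fun_mul hα) hf,
    fderiv_mul_apply hc hα]

end

theorem stmt1_general {N : ℕ}
    (v : (Fin N → ℝ) → (Fin N → ℝ)) (hv : ContDiff ℝ ∞ v)
    (c : (Fin N → ℝ) → ℝ) (hc : ContDiff ℝ ∞ c)
    (α β : (Fin N → ℝ) → (Fin N → ℝ)) (hα : ContDiff ℝ ∞ α) (hβ : ContDiff ℝ ∞ β)
    (f : (Fin N → ℝ) → ℝ) (hf : ContDiff ℝ ∞ f) :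
    ∀ x : Fin N → ℝ,
      aV c v (brktV c v α β) f x
        = aV c v α (aV c v β f) x - aV c v β (aV c v α f) x := by
  intro x
  have hv' : DifferentiableAt ℝ v x := hv.contDiffAt.differentiableAt (by simp)
  have hc' : DifferentiableAt ℝ c x := hc.contDiffAt.differentiableAt (by simp)
  have hα' : DifferentiableAt ℝ α x := hα.contDiffAt.differentiableAt (by simp)
  have hβ' : DifferentiableAt ℝ β x := hβ.contDiffAt.differentiableAt (by simp)
  have hDf : DifferentiableAt ℝ (fun y => fderiv ℝ f y (v y)) x :=
    ((hf.fderiv_right (by simp)).clm_apply hv).contDiffAt.differentiableAt (by simp)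
  rw [aV_apply, aV_apply, aV_apply, pairing_brktV, pairing_lieD_self hv' hα',
    pairing_lieD_self hv' hβ', fderiv_aV_apply hc' (hα'.pairing hv') hDf,
    fderiv_aV_apply hc' (hβ'.pairing hv') hDf]
  ring

/-- `a_v` is a morphism from `[·,·]_v` to the commutator of the associated
first-order differential operators. -/
theorem stmt1 {N : ℕ} (hN : 1 ≤ N)
    (v : (Fin N → ℝ) → (Fin N → ℝ)) (hv : ContDiff ℝ ∞ v)
    (c : (Fin N → ℝ) → ℝ) (hc : ContDiff ℝ ∞ c)
    (α β : (Fin N → ℝ) → (Fin N → ℝ)) (hα : ContDiff ℝ ∞ α) (hβ : ContDiff ℝ ∞ β)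
    (f : (Fin N → ℝ) → ℝ) (hf : ContDiff ℝ ∞ f) :
    ∀ x : Fin N → ℝ,
      aV c v (brktV c v α β) f x
        = aV c v α (aV c v β f) x - aV c v β (aV c v α f) x :=
  stmt1_general v hv c hc α β hα hβ f hf
end

section
/- Let π be a Poisson tensor on ℝ^N, let c be a Casimir function for π, and let v be a smooth vector field on ℝ^N whose Lie derivative of π vanishes, i.e. ∑_{s=1}^N ( v_s ∂π_{ij}/∂x_s − π_{sj} ∂v_i/∂x_s − π_{is} ∂v_j/∂x_s ) = 0 on ℝ^N for all i, j. For smooth covector fields α, β define the vector field π♯α by (π♯α)_j = ∑_i α_i π_{ij}, the function π(α,β) = ∑_{i,j} α_i π_{ij} β_j, and the bracket [α,β]_{c,v} := L_{π♯α} β − L_{π♯β} α − d(π(α,β)) + c·( β(v)·L_v α − α(v)·L_v β ). Then: (1) for all smooth functions f, g one has [df,dg]_{c,v} = d{f,g} + c·( dg(v)·d(df(v)) − df(v)·d(dg(v)) ); and (2) for all smooth functions f, g, h the cyclic Jacobi identity holds: [[df,dg]_{c,v}, dh]_{c,v} + [[dh,df]_{c,v}, dg]_{c,v} + [[dg,dh]_{c,v},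 df]_{c,v} = 0. -/
open scoped ContDiff

/-- A Poisson tensor on `ℝ^N`: a smooth antisymmetric matrix field satisfying the
Jacobi condition. -/
def IsPoissonTensor {N : ℕ} (π : (Fin N → ℝ) → Matrix (Fin N) (Fin N) ℝ) : Prop :=
  (∀ i j, ContDiff ℝ ∞ fun x => π x i j) ∧
  (∀ x i j, π x j i = - π x i j) ∧
  (∀ x i j k, ∑ s, (pd s (fun y => π y i j) x * π x s k
      + pd s (fun y => π y k i) x * π x s j
      + pd s (fun y => π y j k) x * π x s i) = 0)

/-- `c` is a Casimir function for `π`. -/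
def IsCasimir {N : ℕ} (π : (Fin N → ℝ) → Matrix (Fin N) (Fin N) ℝ)
    (c : (Fin N → ℝ) → ℝ) : Prop :=
  ContDiff ℝ ∞ c ∧ ∀ x j, ∑ s, pd s c x * π x s j = 0

/-- The vector field `π♯α`, with `(π♯α)_j = ∑ i, α_i π_{ij}`. -/
noncomputable def sharp {N : ℕ} (π : (Fin N → ℝ) → Matrix (Fin N) (Fin N) ℝ)
    (α : (Fin N → ℝ) → (Fin N → ℝ)) (x : Fin N → ℝ) (j : Fin N) : ℝ :=
  ∑ i, α x i * π x i j

/-- The function `π(α,β) = ∑_{i,j} α_i π_{ij} β_j`. -/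
noncomputable def piAB {N : ℕ} (π : (Fin N → ℝ) → Matrix (Fin N) (Fin N) ℝ)
    (α β : (Fin N → ℝ) → (Fin N → ℝ)) (x : Fin N → ℝ) : ℝ :=
  ∑ i, ∑ j, α x i * π x i j * β x j

/-- The Poisson bracket `{f,g} = ∑_{i,j} π_{ij} ∂f/∂x_i ∂g/∂x_j`. -/
noncomputable def pB {N : ℕ} (π : (Fin N → ℝ) → Matrix (Fin N) (Fin N) ℝ)
    (f g : (Fin N → ℝ) → ℝ) (x : Fin N → ℝ) : ℝ :=
  ∑ i, ∑ j, π x i j * pd i f x * pd j g x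

/-- The deformed bracket
`[α,β]_{c,v} = L_{π♯α} β − L_{π♯β} α − d(π(α,β)) + c (β(v) L_v α − α(v) L_v β)`. -/
noncomputable def brktCV {N : ℕ} (π : (Fin N → ℝ) → Matrix (Fin N) (Fin N) ℝ)
    (c : (Fin N → ℝ) → ℝ) (v : (Fin N → ℝ) → (Fin N → ℝ))
    (α β : (Fin N → ℝ) → (Fin N → ℝ)) (x : Fin N → ℝ) (k : Fin N) : ℝ :=
  lieD (sharp π α) β x k - lieD (sharp π β) α x k - pd k (piAB π α β) x
    + c x * (pairing β v x * lieD v α x k - pairing α v x * lieD v β x k)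

/-!
On exact forms, Cartan's formula `L_X dg = d(dg(X))` turns `[df,dg]_{c,v}` into
`d{f,g} + c (dg(v) d(df(v)) - df(v) d(dg(v)))`. The double bracket `[[df,dg],dh]_{c,v}` is then
expanded by additivity of the bracket in its first argument and the formula for `[u dw, dh]_{c,v}`.
Three facts make the cyclic sum collapse: `{c u, h} = c {u, h}` because `c` is a Casimir function;
`L_v π = 0` makes `f ↦ df(v)` a derivation of `{ , }`; and the Jacobi identity for `{ , }`, which is
the same derivation property for the Hamiltonian fields `π♯dh`. That `L_{π♯dh} π = 0` is the Jacobi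
condition on `π`, once the Hessian of `h`, being symmetric, is contracted away against a tensor
that is antisymmetric in the same indices.
-/

open Finset

variable {N : ℕ}

@[fun_prop]
theorem differentiableAt_of_contDiff {E F : Type*} [NormedAddCommGroup E] [NormedSpace ℝ E]
    [NormedAddCommGroup F] [NormedSpace ℝ F] {f : E → F} (hf : ContDiff ℝ ∞ f) (x : E) :
    DifferentiableAt ℝ f x :=
  hf.differentiable (by simp) x

theorem sum_sum_mul_eq_zero_of_symm_of_antisymm {ι : Type*} (s : Finset ι) {S A : ι → ι → ℝ}
    (hS : ∀ a b, S a b = S b a) (hA : ∀ a b, A a b = -A b a) :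
    ∑ a ∈ s, ∑ b ∈ s, S a b * A a b = 0 := by
  have h : ∑ a ∈ s, ∑ b ∈ s, S a b * A a b = ∑ b ∈ s, ∑ a ∈ s, -(S b a * A b a) :=
    sum_comm.trans (sum_congr rfl fun b _ => sum_congr rfl fun a _ => by rw [hS a b, hA a b]; ring)
  simp only [sum_neg_distrib] at h
  linarith

section PartialDerivative

variable {f g : (Fin N → ℝ) → ℝ} {x : Fin N → ℝ}

theorem pd_add (hf : DifferentiableAt ℝ f x) (hg : DifferentiableAt ℝ g x) (s : Fin N) :
    pd s (fun y => f y + g y) x = pd s f x + pd s g x := by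
  simp [pd, fderiv_fun_add hf hg]

theorem pd_neg (s : Fin N) : pd s (-f) x = -pd s f x := by
  simp [pd, fderiv_neg]

theorem pd_sub (hf : DifferentiableAt ℝ f x) (hg : DifferentiableAt ℝ g x) (s : Fin N) :
    pd s (fun y => f y - g y) x = pd s f x - pd s g x := by
  simp [pd, fderiv_fun_sub hf hg]

theorem pd_mul (hf : DifferentiableAt ℝ f x) (hg : DifferentiableAt ℝ g x) (s : Fin N) :
    pd s (fun y => f y * g y) x = pd s f x * g x + f x * pd s g x := by
  simp only [pd, fderiv_fun_mul hf hg, add_apply, smul_apply, smul_eq_mul]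
  ring

theorem pd_sum {ι : Type*} (t : Finset ι) {F : ι → (Fin N → ℝ) → ℝ}
    (hF : ∀ i ∈ t, DifferentiableAt ℝ (F i) x) (s : Fin N) :
    pd s (fun y => ∑ i ∈ t, F i y) x = ∑ i ∈ t, pd s (F i) x := by
  simp [pd, fderiv_fun_sum hF]

theorem pd_const (a : ℝ) (s : Fin N) : pd s (fun _ => a) x = 0 := by
  simp [pd]

@[fun_prop]
theorem contDiff_pd (hf : ContDiff ℝ ∞ f) (s : Fin N) : ContDiff ℝ ∞ (pd s f) :=
  (hf.fderiv_right (m := ∞) le_rfl).clm_apply contDiff_const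

theorem pd_comm (hf : ContDiff ℝ ∞ f) (a b : Fin N) :
    pd a (pd b f) x = pd b (pd a f) x := by
  have hdf : DifferentiableAt ℝ (fderiv ℝ f) x :=
    (hf.fderiv_right (m := ∞) le_rfl).differentiable (by simp) x
  have hsecond (a b : Fin N) :
      pd a (pd b f) x = fderiv ℝ (fderiv ℝ f) x (Pi.single a 1) (Pi.single b 1) := by
    change fderiv ℝ (fun y => fderiv ℝ f y (Pi.single b 1)) x (Pi.single a 1) = _
    simp [fderiv_clm_apply hdf (differentiableAt_const _)]
  rw [hsecond, hsecond, hf.contDiffAt.isSymmSndFDerivAt (by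
    rw [minSmoothness_of_isRCLikeNormedField]; exact WithTop.coe_le_coe.mpr le_top)]

end PartialDerivative

section VectorCalculus

variable {X v α β : (Fin N → ℝ) → Fin N → ℝ} {f g : (Fin N → ℝ) → ℝ}
  {π : (Fin N → ℝ) → Matrix (Fin N) (Fin N) ℝ} {x : Fin N → ℝ}

@[fun_prop]
theorem contDiff_dF (hf : ContDiff ℝ ∞ f) : ContDiff ℝ ∞ (dF f) :=
  contDiff_pi.2 (contDiff_pd hf)

@[fun_prop]
theorem contDiff_pairing (hα : ContDiff ℝ ∞ α) (hv : ContDiff ℝ ∞ v) :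
    ContDiff ℝ ∞ (pairing α v) := by
  unfold pairing; fun_prop

@[fun_prop]
theorem contDiff_sharp (hπ : ∀ i j, ContDiff ℝ ∞ fun x => π x i j) (hα : ContDiff ℝ ∞ α) :
    ContDiff ℝ ∞ (sharp π α) := by
  unfold sharp; fun_prop

@[fun_prop]
theorem contDiff_piAB (hπ : ∀ i j, ContDiff ℝ ∞ fun x => π x i j) (hα : ContDiff ℝ ∞ α)
    (hβ : ContDiff ℝ ∞ β) : ContDiff ℝ ∞ (piAB π α β) := by
  unfold piAB; fun_prop

@[fun_prop]
theorem contDiff_pB (hπ : ∀ i j, ContDiff ℝ ∞ fun x => π x i j) (hf : ContDiff ℝ ∞ f)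
    (hg : ContDiff ℝ ∞ g) : ContDiff ℝ ∞ (pB π f g) := by
  unfold pB; fun_prop

theorem lieD_dF (hX : DifferentiableAt ℝ X x) (hg : ContDiff ℝ ∞ g) (k : Fin N) :
    lieD X (dF g) x k = pd k (pairing (dF g) X) x := by
  have hXs (s : Fin N) : DifferentiableAt ℝ (fun y => X y s) x := differentiableAt_pi.1 hX s
  have hgs (s : Fin N) : DifferentiableAt ℝ (pd s g) x := by fun_prop
  unfold pairing lieD dF
  rw [pd_sum (F := fun s y => pd s g y * X y s) _ fun s _ => (hgs s).mul (hXs s)]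
  refine sum_congr rfl fun s _ => ?_
  rw [pd_mul (hgs s) (hXs s), pd_comm hg]
  ring

end VectorCalculus

section PoissonBracket

variable {f g : (Fin N → ℝ) → ℝ} {π : (Fin N → ℝ) → Matrix (Fin N) (Fin N) ℝ} {x : Fin N → ℝ}

theorem pairing_dF_sharp_dF : pairing (dF g) (sharp π (dF f)) = pB π f g := by
  funext x
  simp only [pairing, sharp, dF, pB, mul_sum]
  rw [sum_comm]
  exact sum_congr rfl fun i _ => sum_congr rfl fun j _ => by ring

theorem piAB_dF_dF : piAB π (dF f) (dF g) = pB π f g := by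
  funext x
  exact sum_congr rfl fun i _ => sum_congr rfl fun j _ => by simp only [dF]; ring

theorem pB_antisymm (hanti : ∀ x i j, π x j i = -π x i j) : pB π g f = -pB π f g := by
  funext x
  simp only [pB, Pi.neg_apply, ← sum_neg_distrib]
  rw [sum_comm]
  exact sum_congr rfl fun i _ => sum_congr rfl fun j _ => by rw [hanti x i j]; ring

theorem pd_pB (hπ : ∀ i j, ContDiff ℝ ∞ fun x => π x i j) (hf : ContDiff ℝ ∞ f)
    (hg : ContDiff ℝ ∞ g) (s : Fin N) :
    pd s (pB π f g) x = ∑ i, ∑ j, (pd s (fun y => π y i j) x * pd i f x * pd j g x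
      + π x i j * pd s (pd i f) x * pd j g x + π x i j * pd i f x * pd s (pd j g) x) := by
  unfold pB
  rw [pd_sum (F := fun i y => ∑ j, π y i j * pd i f y * pd j g y) _ fun i _ => by fun_prop]
  refine sum_congr rfl fun i _ => ?_
  rw [pd_sum (F := fun j y => π y i j * pd i f y * pd j g y) _ fun j _ => by fun_prop]
  refine sum_congr rfl fun j _ => ?_
  rw [pd_mul (by fun_prop) (by fun_prop), pd_mul (by fun_prop) (by fun_prop)]
  ring

end PoissonBracket

/-- The components `(L_X π)_{ij}` of the Lie derivative of the bivector field `π` along `X`. -/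
noncomputable def lieDBivector (X : (Fin N → ℝ) → Fin N → ℝ)
    (π : (Fin N → ℝ) → Matrix (Fin N) (Fin N) ℝ) (x : Fin N → ℝ) (i j : Fin N) : ℝ :=
  ∑ s, (X x s * pd s (fun y => π y i j) x
    - π x s j * pd s (fun y => X y i) x - π x i s * pd s (fun y => X y j) x)

section Derivation

variable {X : (Fin N → ℝ) → Fin N → ℝ} {f g : (Fin N → ℝ) → ℝ}
  {π : (Fin N → ℝ) → Matrix (Fin N) (Fin N) ℝ} {x : Fin N → ℝ}

theorem pairing_dF_pB (hπ : ∀ i j, ContDiff ℝ ∞ fun x => π x i j)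
    (hX : DifferentiableAt ℝ X x) (hf : ContDiff ℝ ∞ f) (hg : ContDiff ℝ ∞ g) :
    pairing (dF (pB π f g)) X x = pB π (pairing (dF f) X) g x + pB π f (pairing (dF g) X) x
      + ∑ i, ∑ j, pd i f x * pd j g x * lieDBivector X π x i j := by
  -- The terms where `X` itself is differentiated; after renaming summation indices they are the
  -- last two terms of `L_X π`.
  set D : Fin N → Fin N → Fin N → ℝ :=
    fun i j s => π x i j * pd s f x * pd i (fun y => X y s) x * pd j g x
  set E : Fin N → Fin N → Fin N → ℝ :=
    fun i j s => π x i j * pd i f x * pd s g x * pd j (fun y => X y s) x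
  have hLHS : pairing (dF (pB π f g)) X x = ∑ i, ∑ j, ∑ s,
      (pd s (fun y => π y i j) x * pd i f x * pd j g x * X x s
        + π x i j * pd s (pd i f) x * pd j g x * X x s
        + π x i j * pd i f x * pd s (pd j g) x * X x s) := by
    simp only [pairing, dF, pd_pB hπ hf hg, sum_mul, add_mul]
    rw [sum_comm]
    exact sum_congr rfl fun i _ => sum_comm
  have hXf : pB π (pairing (dF f) X) g x = ∑ i, ∑ j, ∑ s,
      (π x i j * pd s (pd i f) x * pd j g x * X x s + D i j s) := by
    simp only [pB, ← lieD_dF hX hf, lieD, dF, mul_sum, sum_mul, D]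
    exact sum_congr rfl fun i _ => sum_congr rfl fun j _ => sum_congr rfl fun s _ => by ring
  have hXg : pB π f (pairing (dF g) X) x = ∑ i, ∑ j, ∑ s,
      (π x i j * pd i f x * pd s (pd j g) x * X x s + E i j s) := by
    simp only [pB, ← lieD_dF hX hg, lieD, dF, mul_sum, E]
    exact sum_congr rfl fun i _ => sum_congr rfl fun j _ => sum_congr rfl fun s _ => by ring
  have hLie : ∑ i, ∑ j, pd i f x * pd j g x * lieDBivector X π x i j = ∑ i, ∑ j, ∑ s,
      (pd s (fun y => π y i j) x * pd i f x * pd j g x * X x s - D s j i - E i s j) := by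
    simp only [lieDBivector, mul_sum, D, E]
    exact sum_congr rfl fun i _ => sum_congr rfl fun j _ => sum_congr rfl fun s _ => by ring
  have hD : ∑ i, ∑ j, ∑ s, D s j i = ∑ i, ∑ j, ∑ s, D i j s := by
    calc ∑ i, ∑ j, ∑ s, D s j i = ∑ j, ∑ s, ∑ i, D s j i := by
          rw [sum_comm]; exact sum_congr rfl fun j _ => sum_comm
      _ = ∑ s, ∑ j, ∑ i, D s j i := sum_comm
  have hE : ∑ i, ∑ j, ∑ s, E i s j = ∑ i, ∑ j, ∑ s, E i j s :=
    sum_congr rfl fun i _ => sum_comm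
  rw [hLHS, hXf, hXg, hLie]
  simp only [sum_add_distrib, sum_sub_distrib, hD, hE]
  ring

theorem pairing_dF_pB_of_lieDBivector_eq_zero
    (hπ : ∀ i j, ContDiff ℝ ∞ fun x => π x i j) (hX : DifferentiableAt ℝ X x)
    (hLX : ∀ i j, lieDBivector X π x i j = 0) (hf : ContDiff ℝ ∞ f) (hg : ContDiff ℝ ∞ g) :
    pairing (dF (pB π f g)) X x = pB π (pairing (dF f) X) g x + pB π f (pairing (dF g) X) x := by
  simp [pairing_dF_pB hπ hX hf hg, hLX]

end Derivation

section Hamiltonian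

variable {h : (Fin N → ℝ) → ℝ} {π : (Fin N → ℝ) → Matrix (Fin N) (Fin N) ℝ} {x : Fin N → ℝ}

theorem pd_sharp_dF (hπ : ∀ i j, ContDiff ℝ ∞ fun x => π x i j) (hh : ContDiff ℝ ∞ h)
    (s k : Fin N) :
    pd s (fun y => sharp π (dF h) y k) x
      = ∑ a, (pd s (pd a h) x * π x a k + pd a h x * pd s (fun y => π y a k) x) := by
  unfold sharp dF
  rw [pd_sum (F := fun a y => pd a h y * π y a k) _ fun a _ => by fun_prop]
  exact sum_congr rfl fun a _ => pd_mul (by fun_prop) (by fun_prop) s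

theorem lieDBivector_sharp_dF (hπ : IsPoissonTensor π) (hh : ContDiff ℝ ∞ h) (i j : Fin N) :
    lieDBivector (sharp π (dF h)) π x i j = 0 := by
  obtain ⟨hπs, hanti, hjac⟩ := hπ
  have hdanti (a b s : Fin N) : pd s (fun y => π y a b) x = -pd s (fun y => π y b a) x := by
    rw [show (fun y => π y a b) = -fun y => π y b a from funext fun y => hanti y b a, pd_neg]
  have hHess : ∑ s, ∑ a, pd s (pd a h) x * (π x s j * π x a i + π x i s * π x a j) = 0 :=
    sum_sum_mul_eq_zero_of_symm_of_antisymm _ (fun s a => pd_comm hh s a) fun s a => by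
      rw [hanti x s i, hanti x a i]; ring
  have hJac : ∑ s, ∑ a, pd a h x * (pd s (fun y => π y i j) x * π x s a
      + pd s (fun y => π y a i) x * π x s j + pd s (fun y => π y j a) x * π x s i) = 0 := by
    rw [sum_comm]
    exact sum_eq_zero fun a _ => by rw [← mul_sum, hjac x i j a, mul_zero]
  calc lieDBivector (sharp π (dF h)) π x i j
      = -(∑ s, ∑ a, pd s (pd a h) x * (π x s j * π x a i + π x i s * π x a j))
        - ∑ s, ∑ a, pd a h x * (pd s (fun y => π y i j) x * π x s a
          + pd s (fun y => π y a i) x * π x s j + pd s (fun y => π y j a) x * π x s i) := by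
        simp only [lieDBivector, pd_sharp_dF hπs hh]
        simp only [sharp, dF, mul_sum, sum_mul, ← sum_sub_distrib, ← sum_neg_distrib]
        refine sum_congr rfl fun s _ => sum_congr rfl fun a _ => ?_
        rw [hanti x s a, hanti x s i, hdanti a j s]
        ring
    _ = 0 := by rw [hHess, hJac]; ring

end Hamiltonian

section Jacobi

variable {f g h : (Fin N → ℝ) → ℝ} {π : (Fin N → ℝ) → Matrix (Fin N) (Fin N) ℝ}

theorem pB_neg_left : pB π (-f) g = -pB π f g := by
  funext x
  simp [pB, pd_neg, ← sum_neg_distrib]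

theorem leibniz_pB (hπ : IsPoissonTensor π) (hf : ContDiff ℝ ∞ f) (hg : ContDiff ℝ ∞ g)
    (hh : ContDiff ℝ ∞ h) (x : Fin N → ℝ) :
    pB π h (pB π f g) x = pB π (pB π h f) g x + pB π f (pB π h g) x := by
  have hπs := hπ.1
  simpa [pairing_dF_sharp_dF] using pairing_dF_pB_of_lieDBivector_eq_zero hπs
    (X := sharp π (dF h)) (x := x) (by fun_prop) (lieDBivector_sharp_dF hπ hh) hf hg

theorem pB_jacobi (hπ : IsPoissonTensor π) (hf : ContDiff ℝ ∞ f) (hg : ContDiff ℝ ∞ g)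
    (hh : ContDiff ℝ ∞ h) (x : Fin N → ℝ) :
    pB π (pB π f g) h x + pB π (pB π h f) g x + pB π (pB π g h) f x = 0 := by
  have hanti := hπ.2.1
  -- turn the cyclic sum into `-{h,{f,g}} + {{h,f},g} + {f,{h,g}}`
  rw [pB_antisymm (f := h) (g := pB π f g) hanti, pB_antisymm (f := h) (g := g) hanti,
    pB_neg_left, pB_antisymm (f := f) (g := pB π h g) hanti]
  simp only [Pi.neg_apply, leibniz_pB hπ hf hg hh x]
  ring

end Jacobi

section Linearity

variable {X Y α β γ : (Fin N → ℝ) → Fin N → ℝ} {u : (Fin N → ℝ) → ℝ}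
  {π : (Fin N → ℝ) → Matrix (Fin N) (Fin N) ℝ} {x : Fin N → ℝ}

theorem sharp_add : sharp π (α + β) = sharp π α + sharp π β := by
  funext x j
  simp [sharp, add_mul, sum_add_distrib]

theorem sharp_sub : sharp π (α - β) = sharp π α - sharp π β := by
  funext x j
  simp [sharp, sub_mul, sum_sub_distrib]

theorem sharp_smul : sharp π (u • α) = u • sharp π α := by
  funext x j
  simp [sharp, mul_sum, mul_assoc]

theorem pairing_add_left : pairing (α + β) X = fun y => pairing α X y + pairing β X y := by
  funext x
  simp [pairing, add_mul, sum_add_distrib]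

theorem pairing_sub_left : pairing (α - β) X = fun y => pairing α X y - pairing β X y := by
  funext x
  simp [pairing, sub_mul, sum_sub_distrib]

theorem pairing_smul_left : pairing (u • α) X = fun y => u y * pairing α X y := by
  funext x
  simp [pairing, mul_sum, mul_assoc]

theorem pairing_smul_right : pairing α (u • X) = fun y => u y * pairing α X y := by
  funext x
  simp only [pairing, mul_sum, Pi.smul_apply', Pi.smul_apply, smul_eq_mul]
  exact sum_congr rfl fun s _ => by ring

theorem piAB_add_left : piAB π (α + β) γ = fun y => piAB π α γ y + piAB π β γ y := by
  funext x
  simp [piAB, add_mul, sum_add_distrib]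

theorem piAB_sub_left : piAB π (α - β) γ = fun y => piAB π α γ y - piAB π β γ y := by
  funext x
  simp [piAB, sub_mul, sum_sub_distrib]

theorem piAB_smul_left : piAB π (u • α) β = fun y => u y * piAB π α β y := by
  funext x
  simp [piAB, mul_sum, mul_assoc]

theorem lieD_add_left (hX : DifferentiableAt ℝ X x) (hY : DifferentiableAt ℝ Y x) (k : Fin N) :
    lieD (X + Y) α x k = lieD X α x k + lieD Y α x k := by
  simp only [lieD, Pi.add_apply, ← sum_add_distrib]
  refine sum_congr rfl fun s _ => ?_
  rw [pd_add (differentiableAt_pi.1 hX s) (differentiableAt_pi.1 hY s)]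
  ring

theorem lieD_sub_left (hX : DifferentiableAt ℝ X x) (hY : DifferentiableAt ℝ Y x) (k : Fin N) :
    lieD (X - Y) α x k = lieD X α x k - lieD Y α x k := by
  simp only [lieD, Pi.sub_apply, ← sum_sub_distrib]
  refine sum_congr rfl fun s _ => ?_
  rw [pd_sub (differentiableAt_pi.1 hX s) (differentiableAt_pi.1 hY s)]
  ring

theorem lieD_add_right (hα : DifferentiableAt ℝ α x) (hβ : DifferentiableAt ℝ β x) (k : Fin N) :
    lieD X (α + β) x k = lieD X α x k + lieD X β x k := by
  simp only [lieD, Pi.add_apply, ← sum_add_distrib]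
  refine sum_congr rfl fun s _ => ?_
  rw [pd_add (differentiableAt_pi.1 hα k) (differentiableAt_pi.1 hβ k)]
  ring

theorem lieD_sub_right (hα : DifferentiableAt ℝ α x) (hβ : DifferentiableAt ℝ β x) (k : Fin N) :
    lieD X (α - β) x k = lieD X α x k - lieD X β x k := by
  simp only [lieD, Pi.sub_apply, ← sum_sub_distrib]
  refine sum_congr rfl fun s _ => ?_
  rw [pd_sub (differentiableAt_pi.1 hα k) (differentiableAt_pi.1 hβ k)]
  ring

theorem lieD_smul_right (hu : DifferentiableAt ℝ u x) (hα : DifferentiableAt ℝ α x) (k : Fin N) :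
    lieD X (u • α) x k = pairing (dF u) X x * α x k + u x * lieD X α x k := by
  simp only [lieD, pairing, dF, Pi.smul_apply', Pi.smul_apply, smul_eq_mul, sum_mul, mul_sum,
    ← sum_add_distrib]
  refine sum_congr rfl fun s _ => ?_
  rw [pd_mul hu (differentiableAt_pi.1 hα k)]
  ring

end Linearity

section Casimir

variable {X : (Fin N → ℝ) → Fin N → ℝ} {c u w h : (Fin N → ℝ) → ℝ}
  {π : (Fin N → ℝ) → Matrix (Fin N) (Fin N) ℝ} {x : Fin N → ℝ}

theorem pB_mul_left (hu : DifferentiableAt ℝ u x) (hw : DifferentiableAt ℝ w x) :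
    pB π (fun y => u y * w y) h x = u x * pB π w h x + w x * pB π u h x := by
  simp only [pB, pd_mul hu hw, mul_sum, ← sum_add_distrib]
  exact sum_congr rfl fun i _ => sum_congr rfl fun j _ => by ring

theorem pB_eq_zero_of_casimir (hc : ∀ x j, ∑ s, pd s c x * π x s j = 0) : pB π c h = 0 := by
  funext x
  simp only [pB, Pi.zero_apply]
  rw [sum_comm]
  refine sum_eq_zero fun j _ => ?_
  calc ∑ i, π x i j * pd i c x * pd j h x = (∑ i, pd i c x * π x i j) * pd j h x := by
        rw [sum_mul]; exact sum_congr rfl fun i _ => by ring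
    _ = 0 := by rw [hc x j, zero_mul]

theorem pairing_dF_mul (hu : DifferentiableAt ℝ u x) (hw : DifferentiableAt ℝ w x) :
    pairing (dF fun y => u y * w y) X x = u x * pairing (dF w) X x + w x * pairing (dF u) X x := by
  simp only [pairing, dF, pd_mul hu hw, mul_sum, ← sum_add_distrib]
  exact sum_congr rfl fun s _ => by ring

end Casimir

section Bracket

variable {v α β γ : (Fin N → ℝ) → Fin N → ℝ} {c f g h u w : (Fin N → ℝ) → ℝ}
  {π : (Fin N → ℝ) → Matrix (Fin N) (Fin N) ℝ} {x : Fin N → ℝ}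

theorem brktCV_dF_dF (hπ : ∀ i j, ContDiff ℝ ∞ fun x => π x i j)
    (hanti : ∀ x i j, π x j i = -π x i j) (hv : DifferentiableAt ℝ v x)
    (hf : ContDiff ℝ ∞ f) (hg : ContDiff ℝ ∞ g) (k : Fin N) :
    brktCV π c v (dF f) (dF g) x k = pd k (pB π f g) x
      + c x * (pairing (dF g) v x * pd k (pairing (dF f) v) x
        - pairing (dF f) v x * pd k (pairing (dF g) v) x) := by
  rw [brktCV, lieD_dF (by fun_prop) hg, lieD_dF (by fun_prop) hf, lieD_dF hv hf, lieD_dF hv hg,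
    pairing_dF_sharp_dF, pairing_dF_sharp_dF, piAB_dF_dF, pB_antisymm (f := f) (g := g) hanti,
    pd_neg]
  ring

theorem brktCV_add (hπ : ∀ i j, ContDiff ℝ ∞ fun x => π x i j) (hα : ContDiff ℝ ∞ α)
    (hβ : ContDiff ℝ ∞ β) (hγ : ContDiff ℝ ∞ γ) (k : Fin N) :
    brktCV π c v (α + β) γ x k = brktCV π c v α γ x k + brktCV π c v β γ x k := by
  simp only [brktCV, sharp_add, piAB_add_left, pairing_add_left]
  rw [lieD_add_left (by fun_prop) (by fun_prop), lieD_add_right (by fun_prop) (by fun_prop),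
    lieD_add_right (by fun_prop) (by fun_prop), pd_add (by fun_prop) (by fun_prop)]
  ring

theorem brktCV_sub (hπ : ∀ i j, ContDiff ℝ ∞ fun x => π x i j) (hα : ContDiff ℝ ∞ α)
    (hβ : ContDiff ℝ ∞ β) (hγ : ContDiff ℝ ∞ γ) (k : Fin N) :
    brktCV π c v (α - β) γ x k = brktCV π c v α γ x k - brktCV π c v β γ x k := by
  simp only [brktCV, sharp_sub, piAB_sub_left, pairing_sub_left]
  rw [lieD_sub_left (by fun_prop) (by fun_prop), lieD_sub_right (by fun_prop) (by fun_prop),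
    lieD_sub_right (by fun_prop) (by fun_prop), pd_sub (by fun_prop) (by fun_prop)]
  ring

theorem brktCV_smul_dF (hπ : ∀ i j, ContDiff ℝ ∞ fun x => π x i j)
    (hanti : ∀ x i j, π x j i = -π x i j) (hv : DifferentiableAt ℝ v x)
    (hu : ContDiff ℝ ∞ u) (hw : ContDiff ℝ ∞ w) (hh : ContDiff ℝ ∞ h) (k : Fin N) :
    brktCV π c v (u • dF w) (dF h) x k = u x * pd k (pB π w h) x + pB π u h x * pd k w x
      + c x * (pairing (dF h) v x * (pairing (dF u) v x * pd k w x
          + u x * pd k (pairing (dF w) v) x)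
        - u x * pairing (dF w) v x * pd k (pairing (dF h) v) x) := by
  rw [brktCV, sharp_smul, lieD_dF (by fun_prop) hh, pairing_smul_right, pairing_dF_sharp_dF,
    pd_mul (by fun_prop) (by fun_prop), lieD_smul_right (by fun_prop) (by fun_prop),
    lieD_dF (by fun_prop) hw, pairing_dF_sharp_dF, pairing_dF_sharp_dF,
    pB_antisymm (f := u) (g := h) hanti, pB_antisymm (f := w) (g := h) hanti, pd_neg,
    piAB_smul_left, piAB_dF_dF, pd_mul (by fun_prop) (by fun_prop), pairing_smul_left,
    lieD_smul_right (by fun_prop) (by fun_prop), lieD_dF hv hw, lieD_dF hv hh]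
  simp only [Pi.neg_apply, dF]
  ring

end Bracket

section Jacobiator

variable {v : (Fin N → ℝ) → Fin N → ℝ} {c f g h : (Fin N → ℝ) → ℝ}
  {π : (Fin N → ℝ) → Matrix (Fin N) (Fin N) ℝ}

theorem brktCV_brktCV_dF_dF (hπ : ∀ i j, ContDiff ℝ ∞ fun x => π x i j)
    (hanti : ∀ x i j, π x j i = -π x i j) (hc : IsCasimir π c) (hv : ContDiff ℝ ∞ v)
    (hLv : ∀ x i j, lieDBivector v π x i j = 0)
    (hf : ContDiff ℝ ∞ f) (hg : ContDiff ℝ ∞ g) (hh : ContDiff ℝ ∞ h)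
    (x : Fin N → ℝ) (k : Fin N) :
    brktCV π c v (brktCV π c v (dF f) (dF g)) (dF h) x k
      = pd k (pB π (pB π f g) h) x
        + c x * (pairing (dF h) v x * (pd k (pB π (pairing (dF f) v) g) x
              - pd k (pB π (pairing (dF g) v) f) x)
            - (pB π (pairing (dF f) v) g x - pB π (pairing (dF g) v) f x)
              * pd k (pairing (dF h) v) x)
        + c x * (pairing (dF g) v x * pd k (pB π (pairing (dF f) v) h) x
            + pB π (pairing (dF g) v) h x * pd k (pairing (dF f) v) x
            + pairing (dF h) v x
              * ((c x * pairing (dF (pairing (dF g) v)) v x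
                  + pairing (dF g) v x * pairing (dF c) v x) * pd k (pairing (dF f) v) x
                + c x * pairing (dF g) v x * pd k (pairing (dF (pairing (dF f) v)) v) x)
            - c x * pairing (dF g) v x * pairing (dF (pairing (dF f) v)) v x
              * pd k (pairing (dF h) v) x)
        - c x * (pairing (dF f) v x * pd k (pB π (pairing (dF g) v) h) x
            + pB π (pairing (dF f) v) h x * pd k (pairing (dF g) v) x
            + pairing (dF h) v x
              * ((c x * pairing (dF (pairing (dF f) v)) v x
                  + pairing (dF f) v x * pairing (dF c) v x) * pd k (pairing (dF g) v) x
                + c x * pairing (dF f) v x * pd k (pairing (dF (pairing (dF g) v)) v) x)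
            - c x * pairing (dF f) v x * pairing (dF (pairing (dF g) v)) v x
              * pd k (pairing (dF h) v) x) := by
  obtain ⟨hc_smooth, hcas⟩ := hc
  have hfg : brktCV π c v (dF f) (dF g) = dF (pB π f g)
      + (fun y => c y * pairing (dF g) v y) • dF (pairing (dF f) v)
      - (fun y => c y * pairing (dF f) v y) • dF (pairing (dF g) v) := by
    funext y k
    rw [brktCV_dF_dF hπ hanti (by fun_prop) hf hg]
    simp only [Pi.add_apply, Pi.sub_apply, Pi.smul_apply', Pi.smul_apply, smul_eq_mul, dF]
    ring
  have hv_fg : pairing (dF (pB π f g)) v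
      = fun y => pB π (pairing (dF f) v) g y - pB π (pairing (dF g) v) f y := by
    funext y
    rw [pairing_dF_pB_of_lieDBivector_eq_zero hπ (by fun_prop) (hLv y) hf hg,
      pB_antisymm (f := pairing (dF g) v) (g := f) hanti, Pi.neg_apply, ← sub_eq_add_neg]
  have hα₁ : ContDiff ℝ ∞ (dF (pB π f g)) := by fun_prop
  have hα₂ : ContDiff ℝ ∞ ((fun y => c y * pairing (dF g) v y) • dF (pairing (dF f) v)) := by
    fun_prop
  have hα₃ : ContDiff ℝ ∞ ((fun y => c y * pairing (dF f) v y) • dF (pairing (dF g) v)) := by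
    fun_prop
  rw [hfg, brktCV_sub hπ (α := dF (pB π f g) + _) (hα₁.add hα₂) hα₃ (by fun_prop),
    brktCV_add hπ hα₁ hα₂ (by fun_prop),
    brktCV_dF_dF hπ hanti (by fun_prop) (by fun_prop) hh,
    brktCV_smul_dF hπ hanti (by fun_prop) (by fun_prop) (by fun_prop) hh,
    brktCV_smul_dF hπ hanti (by fun_prop) (by fun_prop) (by fun_prop) hh,
    pB_mul_left (by fun_prop) (by fun_prop), pB_mul_left (by fun_prop) (by fun_prop),
    pB_eq_zero_of_casimir hcas, pairing_dF_mul (by fun_prop) (by fun_prop),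
    pairing_dF_mul (by fun_prop) (by fun_prop), hv_fg, pd_sub (by fun_prop) (by fun_prop)]
  simp only [Pi.zero_apply]
  ring

end Jacobiator

theorem stmt2_general {N : ℕ}
    (π : (Fin N → ℝ) → Matrix (Fin N) (Fin N) ℝ) (hπ : IsPoissonTensor π)
    (c : (Fin N → ℝ) → ℝ) (hc : IsCasimir π c)
    (v : (Fin N → ℝ) → (Fin N → ℝ)) (hv : ContDiff ℝ ∞ v)
    (hLv : ∀ x i j, ∑ s, (v x s * pd s (fun y => π y i j) x
        - π x s j * pd s (fun y => v y i) x
        - π x i s * pd s (fun y => v y j) x) = 0)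
    (f g h : (Fin N → ℝ) → ℝ)
    (hf : ContDiff ℝ ∞ f) (hg : ContDiff ℝ ∞ g) (hh : ContDiff ℝ ∞ h) :
    (∀ (x : Fin N → ℝ) (k : Fin N),
      brktCV π c v (dF f) (dF g) x k
        = pd k (pB π f g) x
          + c x * (pairing (dF g) v x * pd k (fun y => pairing (dF f) v y) x
            - pairing (dF f) v x * pd k (fun y => pairing (dF g) v y) x)) ∧
    (∀ (x : Fin N → ℝ) (k : Fin N),
      brktCV π c v (brktCV π c v (dF f) (dF g)) (dF h) x k
        + brktCV π c v (brktCV π c v (dF h) (dF f)) (dF g) x k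
        + brktCV π c v (brktCV π c v (dF g) (dF h)) (dF f) x k = 0) := by
  have ⟨hπs, hanti, _⟩ := hπ
  refine ⟨fun x k => brktCV_dF_dF hπs hanti (by fun_prop) hf hg k, fun x k => ?_⟩
  have hJ : pd k (pB π (pB π f g) h) x + pd k (pB π (pB π h f) g) x
      + pd k (pB π (pB π g h) f) x = 0 := by
    rw [← pd_add (by fun_prop) (by fun_prop), ← pd_add (by fun_prop) (by fun_prop),
      funext (pB_jacobi hπ hf hg hh), pd_const]
  rw [brktCV_brktCV_dF_dF hπs hanti hc hv hLv hf hg hh,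
    brktCV_brktCV_dF_dF hπs hanti hc hv hLv hh hf hg,
    brktCV_brktCV_dF_dF hπs hanti hc hv hLv hg hh hf]
  linear_combination hJ

/-- on differentials, `[df,dg]_{c,v} = d{f,g} + c(dg(v) d(df(v)) − df(v) d(dg(v)))`,
and the cyclic Jacobi identity holds. -/
theorem stmt2 {N : ℕ} (hN : 1 ≤ N)
    (π : (Fin N → ℝ) → Matrix (Fin N) (Fin N) ℝ) (hπ : IsPoissonTensor π)
    (c : (Fin N → ℝ) → ℝ) (hc : IsCasimir π c)
    (v : (Fin N → ℝ) → (Fin N → ℝ)) (hv : ContDiff ℝ ∞ v)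
    (hLv : ∀ x i j, ∑ s, (v x s * pd s (fun y => π y i j) x
        - π x s j * pd s (fun y => v y i) x
        - π x i s * pd s (fun y => v y j) x) = 0)
    (f g h : (Fin N → ℝ) → ℝ)
    (hf : ContDiff ℝ ∞ f) (hg : ContDiff ℝ ∞ g) (hh : ContDiff ℝ ∞ h) :
    (∀ (x : Fin N → ℝ) (k : Fin N),
      brktCV π c v (dF f) (dF g) x k
        = pd k (pB π f g) x
          + c x * (pairing (dF g) v x * pd k (fun y => pairing (dF f) v y) x
            - pairing (dF f) v x * pd k (fun y => pairing (dF g) v y) x)) ∧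
    (∀ (x : Fin N → ℝ) (k : Fin N),
      brktCV π c v (brktCV π c v (dF f) (dF g)) (dF h) x k
        + brktCV π c v (brktCV π c v (dF h) (dF f)) (dF g) x k
        + brktCV π c v (brktCV π c v (dF g) (dF h)) (dF f) x k = 0) :=
  stmt2_general π hπ c hc v hv hLv f g h hf hg hh
end
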